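/- The subset {0,1,2} × {0,1}^{n-2} minus the two vertices (0,0,...,0) and (2,1,...,1), viewed as the graph H_n^{--} with adjacency given by two tuples differing by exactly 1 in exactly one coordinate, is a partial cube for every n ≥ 4, but is not a daisy cube. -/

import Mathlib

open SimpleGraph

/-- The hypercube graph `Q_n` on vertex set `{0,1}^n`. -/
def cubeGraph (n : ℕ) : SimpleGraph (Fin n → Bool) where
  Adj a b := (Finset.univ.filter fun i => a i ≠ b i).card = 1
  symm := by
    constructor
    intro a b h
    have hset : (Finset.univ.filter fun i => b i ≠ a i) =
        (Finset.univ.filter fun i => a i ≠ b i) := by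
      apply Finset.filter_congr; intro i _; exact ne_comm
    rw [hset]; exact h
  loopless := by constructor; intro a h; simp at h

/-- The simplex graph `S(G)`: vertices are the cliques of `G` (including `∅`),
two cliques adjacent iff they differ in exactly one vertex. -/
noncomputable def simplexGraph {V : Type*} (G : SimpleGraph V) :
    SimpleGraph {s : Finset V // G.IsClique (↑s : Set V)} := by
  classical
  exact
    { Adj := fun a b => (symmDiff a.1 b.1).card = 1
      symm := by constructor; intro a b h; rwa [symmDiff_comm]
      loopless := by constructor; intro a h; simp [symmDiff_self] at h }

/-- A median graph: connected and every triple of vertices has a unique median. -/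
def IsMedianGraph {V : Type*} (G : SimpleGraph V) : Prop :=
  G.Connected ∧ ∀ u v w : V, ∃! x : V,
    G.dist u x + G.dist x v = G.dist u v ∧
    G.dist u x + G.dist x w = G.dist u w ∧
    G.dist v x + G.dist x w = G.dist v w

/-- `f` is an isometric embedding of `G` into the hypercube `Q_n`
(injective, induced, and distance preserving). -/
def IsIsometricEmbedding {V : Type*} (G : SimpleGraph V) (n : ℕ) (f : V → Fin n → Bool) : Prop :=
  Function.Injective f ∧
    (∀ u v, G.Adj u v ↔ (cubeGraph n).Adj (f u) (f v)) ∧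
    (∀ u v, G.dist u v = (cubeGraph n).dist (f u) (f v))

/-- A partial cube: a graph isomorphic to an isometric subgraph of a hypercube. -/
def IsPartialCube {V : Type*} (G : SimpleGraph V) : Prop :=
  ∃ n f, IsIsometricEmbedding G n f

/-- A daisy cube: an isometric subgraph of a hypercube whose vertex set is
downward closed for the coordinatewise order. -/
def IsDaisyCube {V : Type*} (G : SimpleGraph V) : Prop :=
  ∃ n f, IsIsometricEmbedding G n f ∧
    ∀ (u : V) (b : Fin n → Bool), (∀ i, b i ≤ f u i) → ∃ w, f w = b

/-- The isometric dimension of `G`. -/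
noncomputable def idim {V : Type*} (G : SimpleGraph V) : ℕ :=
  sInf {n | ∃ f, IsIsometricEmbedding G n f}

/-- The Djoković–Winkler relation `Θ` on (unordered) edges. -/
def ThetaE {V : Type*} (G : SimpleGraph V) (e f : Sym2 V) : Prop :=
  ∃ u v x y, e = s(u, v) ∧ f = s(x, y) ∧
    G.dist u x + G.dist v y ≠ G.dist u y + G.dist v x

/-- The halfspace `W_{uv}`. -/
def Wset {V : Type*} (G : SimpleGraph V) (u v : V) : Set V :=
  {w | G.dist u w < G.dist v w}

/-- The set `U_{uv}` of vertices of `W_{uv}` incident with an edge of `F_{uv}`. -/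
def Uset {V : Type*} (G : SimpleGraph V) (u v : V) : Set V :=
  {w | w ∈ Wset G u v ∧ ∃ b ∈ Wset G v u, G.Adj w b}

/-- The Θ-classes of the edges `uv` and `xy` cross: all four intersections of
halfspaces are nonempty. -/
def Cross {V : Type*} (G : SimpleGraph V) (u v x y : V) : Prop :=
  (Wset G u v ∩ Wset G x y).Nonempty ∧ (Wset G u v ∩ Wset G y x).Nonempty ∧
  (Wset G v u ∩ Wset G x y).Nonempty ∧ (Wset G v u ∩ Wset G y x).Nonempty

/-- A set of vertices is convex if it contains every geodesic between its points. -/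
def ConvexSet {V : Type*} (G : SimpleGraph V) (S : Set V) : Prop :=
  ∀ u ∈ S, ∀ v ∈ S, ∀ p : G.Walk u v, p.length = G.dist u v → ∀ w ∈ p.support, w ∈ S

/-- The cycle graph on `ZMod m` (for `m ≥ 3`). -/
def cycG (m : ℕ) : SimpleGraph (ZMod m) where
  Adj i j := i ≠ j ∧ (j = i + 1 ∨ i = j + 1)
  symm := by constructor; rintro i j ⟨h, h'⟩; exact ⟨h.symm, h'.symm⟩
  loopless := by constructor; rintro i ⟨h, _⟩; exact h rfl
/-- The graph `H_n = P_3 □ Q_{n-2}` on `{0,1,2} × {0,1}^{n-2}`: two tuples adjacent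
iff they differ by exactly 1 in exactly one coordinate. -/
def Hgraph (m : ℕ) : SimpleGraph (Fin 3 × (Fin m → Bool)) where
  Adj p q := (p.2 = q.2 ∧ (p.1.val = q.1.val + 1 ∨ q.1.val = p.1.val + 1)) ∨
             (p.1 = q.1 ∧ (Finset.univ.filter fun i => p.2 i ≠ q.2 i).card = 1)
  symm := by
    constructor
    rintro p q h
    rcases h with ⟨h1, h2⟩ | ⟨h1, h2⟩
    · exact Or.inl ⟨h1.symm, h2.symm⟩
    · refine Or.inr ⟨h1.symm, ?_⟩
      have hset : (Finset.univ.filter fun i => q.2 i ≠ p.2 i) =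
          (Finset.univ.filter fun i => p.2 i ≠ q.2 i) := by
        apply Finset.filter_congr; intro i _; exact ne_comm
      rw [hset]; exact h2
  loopless := by
    constructor
    rintro p (⟨_, h | h⟩ | ⟨_, h⟩)
    · omega
    · omega
    · simp at h

/-!
Writing the level `a ∈ {0,1,2}` of `P_3 □ Q_m` in unary embeds it in `Q_{m+2}`. Inside `H^{--}`
every vertex still has a neighbour one step closer, in Hamming distance, to any other vertex, so
the embedding is isometric.

In a daisy cube rooted at the vertex `v` sent to `0`, a vertex `u` has `d(v, u)` neighbours closer
to `v`; hence in any isometric embedding every coordinate in which `u` differs from `v` can be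
flipped towards `v` without leaving the graph. This fails wherever `v` lies: for `v` on level `0`
or `2`, flipping a level bit of a vertex on the opposite level gives the non-codeword `01`, and for
`v` on level `1`, some vertex next to a removed corner would have to be flipped onto that corner.
-/

open Function

section Hamming

variable {ι : Type*} [Fintype ι] [DecidableEq ι]

theorem hammingDist_update_not_of_eq {x z : ι → Bool} {j : ι} (h : z j = x j) :
    hammingDist z (update x j (!x j)) = hammingDist z x + 1 := by
  have hset : Finset.univ.filter (fun k => z k ≠ update x j (!x j) k) =
      insert j (Finset.univ.filter fun k => z k ≠ x k) := by
    ext k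
    rcases eq_or_ne k j with rfl | hk
    · simp [h]
    · simp [hk]
  rw [hammingDist, hset, Finset.card_insert_of_notMem (by simp [h]), hammingDist]

theorem hammingDist_update_of_ne {x : ι → Bool} {j : ι} {b : Bool} (h : x j ≠ b) :
    hammingDist x (update x j b) = 1 := by
  rw [Bool.eq_not.mpr h.symm, hammingDist_update_not_of_eq rfl, hammingDist_self]

theorem hammingDist_update_add_one {x y : ι → Bool} {j : ι} (h : x j ≠ y j) :
    hammingDist (update x j (y j)) y + 1 = hammingDist x y := by
  set x' := update x j (y j)
  have hx' : x' j = y j := update_self ..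
  have hx : update x' j (!x' j) = x := by
    rw [update_idem, hx', ← Bool.eq_not.mpr h, update_eq_self]
  rw [hammingDist_comm x', hammingDist_comm x, ← hammingDist_update_not_of_eq hx'.symm, hx]

theorem exists_eq_update_of_hammingDist_eq_one {x y : ι → Bool} (h : hammingDist x y = 1) :
    ∃ j, y = update x j (!x j) := by
  obtain ⟨j, hj⟩ := Finset.card_eq_one.mp h
  refine ⟨j, funext fun k => ?_⟩
  have hk := Finset.ext_iff.mp hj k
  simp only [Finset.mem_filter, Finset.mem_univ, true_and, Finset.mem_singleton] at hk
  rcases eq_or_ne k j with rfl | hkj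
  · simpa [Bool.eq_not, eq_comm] using hk.mpr rfl
  · simpa [hkj] using (not_not.mp (hk.not.mpr hkj)).symm

theorem hammingDist_append {k l : ℕ} {α : Type*} [DecidableEq α] (x x' : Fin k → α)
    (y y' : Fin l → α) :
    hammingDist (Fin.append x y) (Fin.append x' y') = hammingDist x x' + hammingDist y y' := by
  simp only [hammingDist, Finset.card_filter, Fin.sum_univ_add, Fin.append_left, Fin.append_right]

end Hamming

namespace SimpleGraph

variable {V : Type*} {G : SimpleGraph V}

theorem dist_eq_of_forall_exists_adj (d : V → V → ℕ) (hself : ∀ v, d v v = 0)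
    (hadj : ∀ u w v, G.Adj u w → d u v ≤ d w v + 1)
    (hstep : ∀ u v, u ≠ v → ∃ w, G.Adj u w ∧ d w v + 1 = d u v) (u v : V) :
    G.dist u v = d u v := by
  have hwalk : ∀ k u, d u v = k → ∃ p : G.Walk u v, p.length = k := by
    intro k
    induction k with
    | zero =>
      intro u hu
      by_cases huv : u = v
      · exact huv ▸ ⟨.nil, rfl⟩
      · obtain ⟨w, -, hw⟩ := hstep u v huv
        omega
    | succ k ih =>
      intro u hu
      by_cases huv : u = v
      · subst huv; have := hself u; omega
      · obtain ⟨w, hadj, hw⟩ := hstep u v huv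
        obtain ⟨p, hp⟩ := ih w (by omega)
        exact ⟨.cons hadj p, by simp [hp]⟩
  have hle : ∀ {u v} (p : G.Walk u v), d u v ≤ p.length := by
    intro u v p
    induction p with
    | nil => simp [hself]
    | @cons _ _ w h p ih => have := hadj _ _ w h; simp only [Walk.length_cons]; omega
  obtain ⟨p, hp⟩ := hwalk _ u rfl
  obtain ⟨q, hq⟩ := Reachable.exists_walk_length_eq_dist ⟨p⟩
  exact le_antisymm (hp ▸ dist_le p) (hq ▸ hle q)

end SimpleGraph

theorem cubeGraph_adj_iff {N : ℕ} {x y : Fin N → Bool} :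
    (cubeGraph N).Adj x y ↔ hammingDist x y = 1 := Iff.rfl

theorem cubeGraph_dist {N : ℕ} (x y : Fin N → Bool) :
    (cubeGraph N).dist x y = hammingDist x y := by
  refine dist_eq_of_forall_exists_adj _ hammingDist_self
    (fun x z y h => (hammingDist_triangle x z y).trans (by rw [cubeGraph_adj_iff.mp h, add_comm]))
    (fun x y hxy => ?_) x y
  obtain ⟨j, hj⟩ := Function.ne_iff.mp hxy
  exact ⟨update x j (y j), hammingDist_update_of_ne hj, hammingDist_update_add_one hj⟩

namespace IsIsometricEmbedding

variable {V : Type*} {G : SimpleGraph V} {N M : ℕ} {f : V → Fin N → Bool}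
  {g : V → Fin M → Bool}

theorem of_exists_adj (hinj : Injective f)
    (hadj : ∀ u v, G.Adj u v ↔ hammingDist (f u) (f v) = 1)
    (hstep : ∀ u v, u ≠ v →
      ∃ w, G.Adj u w ∧ hammingDist (f w) (f v) + 1 = hammingDist (f u) (f v)) :
    IsIsometricEmbedding G N f := by
  refine ⟨hinj, hadj, fun u v => ?_⟩
  rw [cubeGraph_dist]
  refine dist_eq_of_forall_exists_adj (fun u v => hammingDist (f u) (f v))
    (fun v => hammingDist_self _) (fun u w v h => ?_) hstep u v
  exact (hammingDist_triangle _ (f w) _).trans (by rw [(hadj u w).mp h, add_comm])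

theorem adj_iff (hf : IsIsometricEmbedding G N f) {u v : V} :
    G.Adj u v ↔ hammingDist (f u) (f v) = 1 :=
  hf.2.1 u v

theorem dist_eq (hf : IsIsometricEmbedding G N f) (u v : V) :
    G.dist u v = hammingDist (f u) (f v) :=
  (hf.2.2 u v).trans (cubeGraph_dist _ _)

theorem ncard_setOf_adj_dist_lt_le (hg : IsIsometricEmbedding G M g) (u v : V) :
    {w | G.Adj u w ∧ G.dist v w < G.dist v u}.ncard ≤
      {j | g u j ≠ g v j ∧ ∃ w, g w = update (g u) j (g v j)}.ncard := by
  have := Finite.of_injective g hg.1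
  rw [← Set.ncard_image_of_injective _ hg.1]
  refine (Set.ncard_le_ncard ?_).trans (Set.ncard_image_le (f := fun j => update (g u) j (g v j)))
  rintro _ ⟨w, ⟨hadj, hlt⟩, rfl⟩
  obtain ⟨j, hj⟩ := exists_eq_update_of_hammingDist_eq_one (hg.adj_iff.mp hadj)
  rw [hg.dist_eq, hg.dist_eq, hj] at hlt
  have hne : g u j ≠ g v j := fun h =>
    (hammingDist_update_not_of_eq h.symm ▸ hlt.not_ge) le_self_add
  rw [← Bool.eq_not.mpr hne.symm] at hj
  exact ⟨j, ⟨hne, w, hj⟩, hj.symm⟩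

theorem dist_le_ncard_setOf_adj_dist_lt (hf : IsIsometricEmbedding G N f)
    (hdown : ∀ u b, (∀ i, b i ≤ f u i) → ∃ w, f w = b) {v : V} (hv : f v = fun _ => false)
    (u : V) : G.dist v u ≤ {w | G.Adj u w ∧ G.dist v w < G.dist v u}.ncard := by
  have := Finite.of_injective f hf.1
  choose w hw using fun i => hdown u (update (f u) i false) fun k => by
    rcases eq_or_ne k i with rfl | hk
    · simp
    · simp [hk]
  have hdist : ∀ i, f u i = true → G.dist v (w i) + 1 = G.dist v u := by
    intro i hi
    have hu : update (f (w i)) i (!f (w i) i) = f u := by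
      rw [hw, update_idem, update_self, Bool.not_false, ← hi, update_eq_self]
    rw [hf.dist_eq, hf.dist_eq, hv, ← hu, hammingDist_update_not_of_eq (by rw [hw, update_self])]
  have hcard : G.dist v u = {i | f u i = true}.ncard := by
    rw [hf.dist_eq, hv, hammingDist, ← Set.ncard_coe_finset]
    congr 1; ext i; cases f u i <;> simp
  rw [hcard]
  refine Set.ncard_le_ncard_of_injOn w (fun i hi => ⟨?_, ?_⟩) (fun i hi j hj hij => ?_)
  · rw [hf.adj_iff, hw]
    exact hammingDist_update_of_ne (by simpa using hi)
  · have := hdist i hi; omega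
  · by_contra hne
    have := congrFun (hw i) i
    rw [hij, hw j, update_self, update_of_ne hne, (hi : f u i = true)] at this
    simp at this

/-- In a daisy cube rooted at `v`, a vertex `u` has at least `dist v u` neighbours closer to `v`.
In any isometric embedding `g` they give distinct coordinates where `g u` and `g v` differ and whose
flip stays in the image, while there are only `dist v u` differing coordinates. -/
theorem exists_eq_update_of_downward_closed (hf : IsIsometricEmbedding G N f)
    (hdown : ∀ u b, (∀ i, b i ≤ f u i) → ∃ w, f w = b) {v : V} (hv : f v = fun _ => false)
    (hg : IsIsometricEmbedding G M g) {u : V} {j : Fin M} (hj : g u j ≠ g v j) :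
    ∃ w, g w = update (g u) j (g v j) := by
  have hle := (hf.dist_le_ncard_setOf_adj_dist_lt hdown hv u).trans
    (hg.ncard_setOf_adj_dist_lt_le u v)
  have hdist : G.dist v u = {j | g u j ≠ g v j}.ncard := by
    rw [hg.dist_eq, hammingDist, ← Set.ncard_coe_finset]
    congr 1; ext i; simp [eq_comm]
  have heq := Set.eq_of_subset_of_ncard_le (fun j hj => hj.1) (hdist ▸ hle)
  have hjK : j ∈ {j | g u j ≠ g v j} := hj
  rw [← heq] at hjK
  exact hjK.2

end IsIsometricEmbedding

namespace Hgraph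

variable {m : ℕ}

/-- Vertices of `P_3 □ Q_m` as bit strings, the level `a ∈ {0,1,2}` written in unary on the
first two bits. -/
def toCube (p : Fin 3 × (Fin m → Bool)) : Fin (2 + m) → Bool :=
  Fin.append (fun i : Fin 2 => decide (i.val < p.1.val)) p.2

theorem hammingDist_toCube (p q : Fin 3 × (Fin m → Bool)) :
    hammingDist (toCube p) (toCube q) =
      (p.1 : ℕ) - q.1 + (q.1 - p.1) + hammingDist p.2 q.2 := by
  have hlevel : ∀ a b : Fin 3, hammingDist (fun i : Fin 2 => decide (i.val < a.val))
      (fun i => decide (i.val < b.val)) = (a : ℕ) - b + (b - a) := by decide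
  rw [toCube, toCube, hammingDist_append, hlevel]

theorem toCube_injective : Injective (toCube (m := m)) := by
  intro p q h
  have h := hammingDist_eq_zero.mpr h
  rw [hammingDist_toCube] at h
  exact Prod.ext (Fin.ext (by omega)) (hammingDist_eq_zero.mp (by omega))

theorem adj_iff_hammingDist_toCube {p q : Fin 3 × (Fin m → Bool)} :
    (Hgraph m).Adj p q ↔ hammingDist (toCube p) (toCube q) = 1 := by
  change (p.2 = q.2 ∧ _) ∨ (p.1 = q.1 ∧ hammingDist p.2 q.2 = 1) ↔ _
  rw [hammingDist_toCube, ← hammingDist_eq_zero, Fin.ext_iff]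
  omega

theorem toCube_update_natAdd (p : Fin 3 × (Fin m → Bool)) (i : Fin m) (b : Bool) :
    update (toCube p) (Fin.natAdd 2 i) b = toCube (p.1, update p.2 i b) := by
  funext k
  refine Fin.addCases (fun k => ?_) (fun k => ?_) k
  · have hk : Fin.castAdd m k ≠ Fin.natAdd 2 i := by simp [Fin.ext_iff]; omega
    simp [toCube, update_of_ne hk]
  · rcases eq_or_ne k i with rfl | hk
    · simp [toCube]
    · simp [toCube, hk]

theorem toCube_natAdd (p : Fin 3 × (Fin m → Bool)) (i : Fin m) :
    toCube p (Fin.natAdd 2 i) = p.2 i := by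
  simp [toCube]

theorem toCube_castAdd_one_le_zero (p : Fin 3 × (Fin m → Bool)) :
    toCube p (Fin.castAdd m 1) ≤ toCube p (Fin.castAdd m 0) := by
  simp only [toCube, Fin.append_left]
  generalize p.1 = a
  revert a
  decide

/-- The vertex set of `H^{--}`. -/
def cornersRemoved (m : ℕ) : Set (Fin 3 × (Fin m → Bool)) :=
  {p | p ≠ ((0 : Fin 3), fun _ => false) ∧ p ≠ ((2 : Fin 3), fun _ => true)}

theorem mk_mem_cornersRemoved_iff {a : Fin 3} {x : Fin m → Bool} :
    (a, x) ∈ cornersRemoved m ↔ a = 1 ∨ x ≠ fun _ => decide (a = 2) := by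
  fin_cases a <;> simp [cornersRemoved]

theorem exists_update_ne {x y : Fin m → Bool} {c : Bool} (hxy : x ≠ y) (hy : y ≠ fun _ => c) :
    ∃ i, x i ≠ y i ∧ update x i (y i) ≠ fun _ => c := by
  obtain ⟨i, hi⟩ := Function.ne_iff.mp hxy
  by_cases hc : update x i (y i) = fun _ => c
  · obtain ⟨j, hj⟩ := Function.ne_iff.mp hy
    have hyi : y i = c := by simpa using congrFun hc i
    have hji : j ≠ i := by rintro rfl; exact hj hyi
    have hxj : x j = c := by simpa [hji] using congrFun hc j
    refine ⟨j, hxj ▸ Ne.symm hj, fun h => hi ?_⟩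
    simpa [hji.symm, hyi] using congrFun h i
  · exact ⟨i, hi, hc⟩

theorem exists_adj_hammingDist_toCube_lt {u v : Fin 3 × (Fin m → Bool)}
    (hv : v ∈ cornersRemoved m) (huv : u ≠ v) :
    ∃ w ∈ cornersRemoved m, (Hgraph m).Adj u w ∧
      hammingDist (toCube w) (toCube v) + 1 = hammingDist (toCube u) (toCube v) := by
  obtain ⟨a, x⟩ := u
  obtain ⟨b, y⟩ := v
  simp only [adj_iff_hammingDist_toCube, hammingDist_toCube]
  have hflip : ∀ i, x i ≠ y i → hammingDist x (update x i (y i)) = 1 ∧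
      hammingDist (update x i (y i)) y + 1 = hammingDist x y := fun i hi =>
    ⟨hammingDist_update_of_ne hi, hammingDist_update_add_one hi⟩
  have hb := b.isLt
  by_cases ha : a = 1
  · subst ha
    by_cases hxy : x = y
    · subst hxy
      have hb1 : (b : ℕ) ≠ 1 := fun h => huv (Prod.ext (Fin.ext h).symm rfl)
      exact ⟨(b, x), hv, by simp; omega, by simp; omega⟩
    · obtain ⟨i, hi⟩ := ne_iff.mp hxy
      exact ⟨(1, update x i (y i)), mk_mem_cornersRemoved_iff.mpr (.inl rfl),
        by simp [hflip i hi], by simp [← (hflip i hi).2]; omega⟩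
  · by_cases hab : a = b
    · subst hab
      have hxy : x ≠ y := by rintro rfl; exact huv rfl
      obtain ⟨i, hi, hc⟩ :=
        exists_update_ne hxy ((mk_mem_cornersRemoved_iff.mp hv).resolve_left ha)
      exact ⟨(a, update x i (y i)), mk_mem_cornersRemoved_iff.mpr (.inr hc), by simp [hflip i hi],
        by simp [← (hflip i hi).2]⟩
    · have := a.isLt
      rw [Fin.ext_iff] at ha hab
      exact ⟨(1, x), mk_mem_cornersRemoved_iff.mpr (.inl rfl), by simp; omega, by simp; omega⟩

theorem isIsometricEmbedding_induce_cornersRemoved (m : ℕ) :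
    IsIsometricEmbedding ((Hgraph m).induce (cornersRemoved m)) (2 + m) (fun u => toCube u.1) := by
  refine .of_exists_adj (toCube_injective.comp Subtype.val_injective)
    (fun _ _ => adj_iff_hammingDist_toCube) fun u v huv => ?_
  obtain ⟨w, hw, hadj, hd⟩ :=
    exists_adj_hammingDist_toCube_lt v.2 (Subtype.val_injective.ne huv)
  exact ⟨⟨w, hw⟩, hadj, hd⟩

theorem exists_update_toCube_notMem (hm : 0 < m) (v : Fin 3 × (Fin m → Bool)) :
    ∃ u ∈ cornersRemoved m, ∃ j, toCube u j ≠ toCube v j ∧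
      ∀ w ∈ cornersRemoved m, toCube w ≠ update (toCube u) j (toCube v j) := by
  obtain ⟨a, x⟩ := v
  let i : Fin m := ⟨0, hm⟩
  by_cases ha : a = 1
  · subst ha
    cases hxi : x i
    · refine ⟨(0, update (fun _ => false) i true),
        mk_mem_cornersRemoved_iff.mpr (.inr fun h => by simpa using congrFun h i),
        Fin.natAdd 2 i, by simp [toCube_natAdd, hxi], fun w hw h => hw.1 (toCube_injective ?_)⟩
      simpa [toCube_natAdd, hxi, toCube_update_natAdd] using h
    · refine ⟨(2, update (fun _ => true) i false),
        mk_mem_cornersRemoved_iff.mpr (.inr fun h => by simpa using congrFun h i),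
        Fin.natAdd 2 i, by simp [toCube_natAdd, hxi], fun w hw h => hw.2 (toCube_injective ?_)⟩
      simpa [toCube_natAdd, hxi, toCube_update_natAdd] using h
  · obtain rfl | rfl : a = 0 ∨ a = 2 := by omega
    · refine ⟨(2, fun _ => false),
        mk_mem_cornersRemoved_iff.mpr (.inr fun h => by simpa using congrFun h i),
        Fin.castAdd m 0, by simp [toCube], fun w _ h => ?_⟩
      have := toCube_castAdd_one_le_zero w
      rw [h] at this
      simp [toCube, Bool.le_iff_imp] at this
    · refine ⟨(0, fun _ => true),
        mk_mem_cornersRemoved_iff.mpr (.inr fun h => by simpa using congrFun h i),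
        Fin.castAdd m 1, by simp [toCube], fun w _ h => ?_⟩
      have := toCube_castAdd_one_le_zero w
      rw [h] at this
      simp [toCube, Bool.le_iff_imp] at this

theorem not_isDaisyCube_induce_cornersRemoved (hm : 0 < m) :
    ¬ IsDaisyCube ((Hgraph m).induce (cornersRemoved m)) := by
  rintro ⟨N, f, hf, hdown⟩
  obtain ⟨v, hv⟩ := hdown ⟨(1, fun _ => false), mk_mem_cornersRemoved_iff.mpr (.inl rfl)⟩ _
    fun _ => Bool.false_le _
  obtain ⟨u, hu, j, hj, hnot⟩ := exists_update_toCube_notMem hm v.1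
  obtain ⟨w, hw⟩ := hf.exists_eq_update_of_downward_closed hdown hv
    (isIsometricEmbedding_induce_cornersRemoved m) (u := ⟨u, hu⟩) hj
  exact hnot w w.2 hw

end Hgraph

/-- For every `n ≥ 4`, the graph `H_n^{--}`, obtained from `P_3 □ Q_{n-2}` by deleting
the vertices `(0,0,…,0)` and `(2,1,…,1)`, is a partial cube but not a daisy cube. -/
theorem stmt19 (n : ℕ) (hn : 4 ≤ n) :
    IsPartialCube ((Hgraph (n - 2)).induce
      {p | p ≠ ((0 : Fin 3), fun _ => false) ∧ p ≠ ((2 : Fin 3), fun _ => true)}) ∧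
    ¬ IsDaisyCube ((Hgraph (n - 2)).induce
      {p | p ≠ ((0 : Fin 3), fun _ => false) ∧ p ≠ ((2 : Fin 3), fun _ => true)}) :=
  ⟨⟨_, _, Hgraph.isIsometricEmbedding_induce_cornersRemoved (n - 2)⟩,
    Hgraph.not_isDaisyCube_induce_cornersRemoved (by omega)⟩
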